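/- For every n ≥ 2, there is a bijection between the set of bargraphs of semiperimeter n and the set of Motzkin paths with no peaks and no valleys whose total number of up steps plus horizontal steps equals n−1. -/

import Mathlib

/-!
A bargraph is forced to start with `U` and end with `D`, so it is the elevation `U m D` of a
word `m`; its strict positivity away from the endpoints is exactly the nonnegativity of `m`,
and its semiperimeter is `#U(m) + #H(m) + 1`. Since a Motzkin path can neither start with `D`
nor end with `U`, the outer `U` and `D` create no peak or valley, so the bargraphs are precisely
the elevations of the nonempty cornerless Motzkin paths, and removing the first and last step
is the bijection.
-/

/-- Steps of bargraphs / Motzkin paths. -/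
inductive Step where
  | U : Step
  | H : Step
  | D : Step
deriving DecidableEq

/-- Vertical displacement of a step. -/
def Step.val : Step → ℤ
  | .U => 1
  | .H => 0
  | .D => -1

/-- Mirror of a step (swap U and D). -/
def Step.mirror : Step → Step
  | .U => .D
  | .H => .H
  | .D => .U

/-- Final height of a word. -/
def hgt (w : List Step) : ℤ := (w.map Step.val).sum

/-- A Motzkin path prefix: never goes below the x-axis. -/
def IsMotzkinPrefix (w : List Step) : Prop := ∀ p : List Step, p <+: w → 0 ≤ hgt p

/-- A Motzkin path: never below the x-axis, ends at height 0. -/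
def IsMotzkin (w : List Step) : Prop := IsMotzkinPrefix w ∧ hgt w = 0

/-- No peak `UD` and no valley `DU`. -/
def Cornerless (w : List Step) : Prop :=
  ¬ [Step.U, Step.D] <:+: w ∧ ¬ [Step.D, Step.U] <:+: w

/-- A bargraph: starts at the origin, ends on the x-axis, stays strictly above the
x-axis except at the endpoints, and has no factor `UD` or `DU`. -/
def IsBargraph (w : List Step) : Prop :=
  2 ≤ w.length ∧ hgt w = 0 ∧
    (∀ p : List Step, p <+: w → p ≠ [] → p ≠ w → 0 < hgt p) ∧ Cornerless w

/-- Semiperimeter: number of `U` steps plus number of `H` steps. -/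
def semi (w : List Step) : ℕ := w.count Step.U + w.count Step.H

/-- Length of the initial run of `U` steps. -/
def leadU : List Step → ℕ
  | Step.U :: rest => leadU rest + 1
  | _ => 0

/-- Length of the initial run of `H` steps. -/
def leadH : List Step → ℕ
  | Step.H :: rest => leadH rest + 1
  | _ => 0

/-- Length of the initial run of `D` steps. -/
def leadD : List Step → ℕ
  | Step.D :: rest => leadD rest + 1
  | _ => 0

/-- Length of the first maximal run of `D` steps (0 if none). -/
def firstDescLen : List Step → ℕ
  | [] => 0
  | Step.D :: rest => leadD rest + 1
  | _ :: rest => firstDescLen rest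

/-- Number of occurrences of the two-letter factor `a b`. -/
def cnt2 (a b : Step) : List Step → ℕ
  | x :: y :: rest => (if x = a ∧ y = b then 1 else 0) + cnt2 a b (y :: rest)
  | _ => 0

/-- Heights of the columns (`H` steps), starting from a given height. -/
def colHeights : ℤ → List Step → List ℤ
  | _, [] => []
  | h, Step.U :: rest => colHeights (h + 1) rest
  | h, Step.H :: rest => h :: colHeights h rest
  | h, Step.D :: rest => colHeights (h - 1) rest

/-- Width of the leftmost maximal horizontal segment (0 if none). -/
def lhsW : List Step → ℕ
  | [] => 0
  | Step.H :: rest => leadH rest + 1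
  | _ :: rest => lhsW rest

/-- Delete `h` steps at the start of the leftmost horizontal segment. -/
def stripLeadH (h : ℕ) : List Step → List Step
  | [] => []
  | Step.H :: rest => List.drop h (Step.H :: rest)
  | s :: rest => s :: stripLeadH h rest

/-- Number of initial columns of height 1: largest `j` such that the word begins `U H^j`. -/
def iuc : List Step → ℕ
  | Step.U :: rest => leadH rest
  | _ => 0

/-- Number of maximal horizontal segments. -/
def hsCount : List Step → ℕ
  | [] => 0
  | [Step.H] => 1
  | [_] => 0
  | a :: b :: rest => (if a = Step.H ∧ b ≠ Step.H then 1 else 0) + hsCount (b :: rest)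

/-- Mirror image: reverse the word and swap `U` with `D`. -/
def mir (w : List Step) : List Step := (w.reverse).map Step.mirror

/-- Shape of strictly alternating bargraphs:
`U^{i₁} H D^{k₁} H U^{i₂} H D^{k₂} H ⋯ U^{iₘ} H D^{kₘ}` with all `iᵣ, kᵣ ≥ 1`. -/
inductive SAShape : List Step → Prop where
  | base (i k : ℕ) : 1 ≤ i → 1 ≤ k →
      SAShape (List.replicate i Step.U ++ [Step.H] ++ List.replicate k Step.D)
  | cons (i k : ℕ) (w : List Step) : 1 ≤ i → 1 ≤ k → SAShape w →
      SAShape (List.replicate i Step.U ++ [Step.H] ++ List.replicate k Step.D ++ [Step.H] ++ w)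

/-- A strictly alternating bargraph. -/
def IsStrictAlt (w : List Step) : Prop := IsBargraph w ∧ SAShape w

/-- A secondary structure on `{0, …, m-1}`: all consecutive edges are present, every
vertex has at most one non-consecutive neighbour, and there are no crossing edges. -/
def IsSecondaryStructure {m : ℕ} (G : SimpleGraph (Fin m)) : Prop :=
  (∀ i j : Fin m, (i : ℕ) + 1 = (j : ℕ) → G.Adj i j) ∧
  (∀ i j k : Fin m, G.Adj i j → G.Adj i k →
      (i : ℕ) + 1 ≠ (j : ℕ) → (j : ℕ) + 1 ≠ (i : ℕ) →
      (i : ℕ) + 1 ≠ (k : ℕ) → (k : ℕ) + 1 ≠ (i : ℕ) → j = k) ∧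
  ¬ ∃ i j k l : Fin m, (i : ℕ) < (j : ℕ) ∧ (j : ℕ) < (k : ℕ) ∧ (k : ℕ) < (l : ℕ) ∧
      G.Adj i k ∧ G.Adj j l

/-- Generating function of bargraphs: `x` (variable 0) marks `H` steps,
`y` (variable 1) marks `U` steps. -/
noncomputable def BG : MvPowerSeries (Fin 2) ℚ :=
  fun d => (Nat.card {w : List Step //
    IsBargraph w ∧ w.count Step.H = d 0 ∧ w.count Step.U = d 1} : ℚ)

/-- Generating function of cornerless Motzkin paths. -/
noncomputable def MG : MvPowerSeries (Fin 2) ℚ :=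
  fun d => (Nat.card {w : List Step //
    IsMotzkin w ∧ Cornerless w ∧ w.count Step.H = d 0 ∧ w.count Step.U = d 1} : ℚ)

/-- Generating function of bargraphs avoiding the factor `DH`. -/
noncomputable def BDH : MvPowerSeries (Fin 2) ℚ :=
  fun d => (Nat.card {w : List Step //
    IsBargraph w ∧ ¬ [Step.D, Step.H] <:+: w ∧
      w.count Step.H = d 0 ∧ w.count Step.U = d 1} : ℚ)

/-- Generating function of bargraphs avoiding the factors `DH` and `HH`. -/
noncomputable def BDHHH : MvPowerSeries (Fin 2) ℚ :=
  fun d => (Nat.card {w : List Step //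
    IsBargraph w ∧ ¬ [Step.D, Step.H] <:+: w ∧ ¬ [Step.H, Step.H] <:+: w ∧
      w.count Step.H = d 0 ∧ w.count Step.U = d 1} : ℚ)

/-- Generating function of cornerless Motzkin path prefixes ending at height `h`. -/
noncomputable def Pgf (h : ℕ) : MvPowerSeries (Fin 2) ℚ :=
  fun d => (Nat.card {w : List Step //
    IsMotzkinPrefix w ∧ Cornerless w ∧ hgt w = (h : ℤ) ∧
      w.count Step.H = d 0 ∧ w.count Step.U = d 1} : ℚ)

/-- Decomposition `G = U^a G₁ H G₂ D^a` of a strictly alternating bargraph. -/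
def SADecomp (t : ℕ × List Step × List Step) (G : List Step) : Prop :=
  1 ≤ t.1 ∧ IsStrictAlt t.2.1 ∧ IsStrictAlt (Step.U :: (t.2.2 ++ [Step.D])) ∧
    G = List.replicate t.1 Step.U ++ t.2.1 ++ [Step.H] ++ t.2.2 ++
      List.replicate t.1 Step.D

open List

def elevate (m : List Step) : List Step := Step.U :: m ++ [Step.D]

@[simp] lemma hgt_nil : hgt [] = 0 := rfl

@[simp] lemma hgt_cons (a : Step) (l : List Step) : hgt (a :: l) = a.val + hgt l := by
  simp [hgt]

@[simp] lemma hgt_append (l l' : List Step) : hgt (l ++ l') = hgt l + hgt l' := by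
  simp [hgt]

lemma not_infix_pair_iff_isChain {α : Type*} {x y : α} {l : List α} :
    ¬ [x, y] <:+: l ↔ l.IsChain (fun a b => ¬ (a = x ∧ b = y)) := by
  rw [isChain_iff_forall_rel_of_append_cons_cons]
  constructor
  · rintro h a b s t rfl ⟨rfl, rfl⟩
    exact h ⟨s, t, by simp⟩
  · rintro h ⟨s, t, rfl⟩
    exact h (l₁ := s) (l₂ := t) (by simp) ⟨rfl, rfl⟩

lemma IsMotzkinPrefix.head?_ne_D {m : List Step} (h : IsMotzkinPrefix m) :
    m.head? ≠ some .D := by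
  intro hD
  obtain ⟨t, rfl⟩ := head?_eq_some_iff.mp hD
  simpa [Step.val] using h [.D] ⟨t, rfl⟩

lemma IsMotzkin.getLast?_ne_U {m : List Step} (h : IsMotzkin m) :
    m.getLast? ≠ some .U := by
  intro hU
  obtain ⟨s, rfl⟩ := getLast?_eq_some_iff.mp hU
  have hs := h.1 s (prefix_append _ _)
  have h0 := h.2
  simp [Step.val] at h0
  omega

lemma cornerless_elevate_iff {m : List Step} (hne : m ≠ []) (hhead : m.head? ≠ some .D)
    (hlast : m.getLast? ≠ some .U) : Cornerless (elevate m) ↔ Cornerless m := by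
  simp only [Cornerless, not_infix_pair_iff_isChain, elevate, cons_append, isChain_cons,
    isChain_append]
  obtain ⟨a, t, rfl⟩ := exists_cons_of_ne_nil hne
  have hlast' : ∀ x, (a :: t).getLast? = some x → x ≠ .U := fun x hx h => hlast (h ▸ hx)
  simp_all

lemma isBargraph_elevate_iff {m : List Step} :
    IsBargraph (elevate m) ↔ m ≠ [] ∧ IsMotzkin m ∧ Cornerless m := by
  constructor
  · rintro ⟨-, h0, hpos, hc⟩
    have hne : m ≠ [] := by
      rintro rfl
      exact hc.1 (infix_refl _)
    have hm : IsMotzkin m := by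
      refine ⟨fun p hp => ?_, by simpa [elevate, Step.val] using h0⟩
      have hp' : 0 < hgt (.U :: p) := by
        refine hpos _ (cons_prefix_cons.2 ⟨rfl, hp.trans (prefix_append _ _)⟩) (cons_ne_nil _ _)
          fun h => ?_
        have := congrArg length h
        simp [elevate] at this
        have := hp.length_le
        omega
      simp [Step.val] at hp'
      omega
    exact ⟨hne, hm, (cornerless_elevate_iff hne hm.1.head?_ne_D hm.getLast?_ne_U).1 hc⟩
  · rintro ⟨hne, hm, hc⟩
    refine ⟨by simp [elevate], by simpa [elevate, Step.val] using hm.2, fun p hp hp0 hpw => ?_,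
      (cornerless_elevate_iff hne hm.1.head?_ne_D hm.getLast?_ne_U).2 hc⟩
    obtain rfl | ⟨q, rfl, hq⟩ := prefix_cons_iff.1 hp
    · exact absurd rfl hp0
    obtain rfl | hq := prefix_concat_iff.1 hq
    · exact absurd rfl hpw
    have := hm.1 q hq
    simp [Step.val]
    omega

lemma IsBargraph.exists_eq_elevate {w : List Step} (hw : IsBargraph w) :
    ∃ m, w = elevate m := by
  obtain ⟨hlen, h0, hpos, -⟩ := hw
  obtain ⟨a, m, b, rfl⟩ : ∃ a m b, w = a :: m ++ [b] := by
    rcases w with _ | ⟨a, t⟩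
    · simp at hlen
    rcases t.eq_nil_or_concat with rfl | ⟨m, b, rfl⟩
    · simp at hlen
    exact ⟨a, m, b, by simp⟩
  have ha := hpos [a] (prefix_cons_iff.2 (.inr ⟨[], rfl, nil_prefix⟩)) (cons_ne_nil _ _)
    (by simp)
  have hb := hpos (a :: m) (prefix_append _ _) (cons_ne_nil _ _) (by simp)
  cases a <;> cases b <;> simp [Step.val] at ha hb h0 ⊢ <;> first | exact ⟨m, rfl⟩ | omega

lemma elevate_injective : Function.Injective elevate := fun m m' h => by
  simpa [elevate] using h

lemma semi_elevate (m : List Step) : semi (elevate m) = m.count .U + m.count .H + 1 := by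
  simp [semi, elevate]
  omega

/-- for every `n ≥ 2` there is a bijection between bargraphs of
semiperimeter `n` and cornerless Motzkin paths with `#U + #H = n - 1`. -/
theorem bargraph_cornerlessMotzkin_bijection :
    ∀ n : ℕ, 2 ≤ n →
      Nonempty ({w : List Step // IsBargraph w ∧ semi w = n} ≃
        {w : List Step // IsMotzkin w ∧ Cornerless w ∧
          w.count Step.U + w.count Step.H = n - 1}) := by
  intro n hn
  have hne {m : List Step} (hm : m.count .U + m.count .H = n - 1) : m ≠ [] := by
    rintro rfl
    simp at hm
    omega
  let f : {m : List Step // IsMotzkin m ∧ Cornerless m ∧ m.count .U + m.count .H = n - 1} →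
      {w : List Step // IsBargraph w ∧ semi w = n} := fun m =>
    ⟨elevate m, isBargraph_elevate_iff.2 ⟨hne m.2.2.2, m.2.1, m.2.2.1⟩, by
      rw [semi_elevate, m.2.2.2]
      omega⟩
  have hf : Function.Injective f := fun m m' h =>
    Subtype.ext (elevate_injective (congrArg Subtype.val h))
  refine ⟨(Equiv.ofBijective f ⟨hf, ?_⟩).symm⟩
  rintro ⟨w, hw, hsemi⟩
  obtain ⟨m, rfl⟩ := hw.exists_eq_elevate
  obtain ⟨-, hm, hc⟩ := isBargraph_elevate_iff.1 hw
  exact ⟨⟨m, hm, hc, by rw [semi_elevate] at hsemi; omega⟩, rfl⟩
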